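/- For every n ≥ 0, the identity Σ_{T∈𝒜_{n+1}} u^{oleaf(T)} v^{yleaf(T)} = Σ_{k=0}^{⌊n/2⌋} binom(n, 2k) · C_k · u^{k+1} v^{n−2k} holds in ℤ[u,v], where 𝒜_m is the set of tip-augmented plane trees with m edges (plane trees with no young internal node) and C_k = binom(2k,k)/(k+1) is the k-th Catalan number. -/

import Mathlib

/-- Labeled plane trees: a node with a label in `ℕ` and a (left-to-right ordered)
list of children. -/
inductive LTree : Type where
  | node : ℕ → List LTree → LTree

namespace LTree

/-- The label of the root. -/
def label : LTree → ℕ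
  | node a _ => a

/-- The list of children of the root, from left to right. -/
def children : LTree → List LTree
  | node _ cs => cs

/-- A tree consisting of a single node is a leaf. -/
def isLeaf (t : LTree) : Bool := t.children.isEmpty

/-- The list of all subtrees (i.e. all nodes) of a tree. -/
def subtrees : LTree → List LTree
  | node a cs => node a cs :: (cs.attach.map (fun c => subtrees c.1)).flatten
decreasing_by
  simp only [LTree.node.sizeOf_spec]
  have := List.sizeOf_lt_of_mem c.2
  omega

/-- The multiset of labels of all nodes of a tree. -/
def labels (T : LTree) : Multiset ℕ := (T.subtrees.map label : List ℕ)

/-- `T` is a weakly increasing tree on the multiset `M`: the root is labeled `0`,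
the multiset of labels is `M ∪ {0}`, labels weakly increase along root-to-leaf paths,
and the labels of the children of each node weakly increase from right to left. -/
def IsWIT (M : Multiset ℕ) (T : LTree) : Prop :=
  T.label = 0 ∧ T.labels = 0 ::ₘ M ∧
  ∀ t ∈ T.subtrees, (∀ c ∈ t.children, t.label ≤ c.label) ∧
    List.Chain' (fun a b => b ≤ a) (t.children.map label)

/-- `T` is (an encoding of) a plane tree with `n` edges: all labels are zero
and there are `n + 1` nodes. -/
def IsPlane (n : ℕ) (T : LTree) : Prop :=
  (∀ t ∈ T.subtrees, t.label = 0) ∧ T.subtrees.length = n + 1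

/-- The number of singleton leaves: leaves that are the only child of their parent. -/
def sleaf (T : LTree) : ℕ :=
  T.subtrees.countP (fun t => match t.children with
    | [c] => c.isLeaf
    | _ => false)

/-- The number of elder leaves: leaves that are the leftmost child of their parent
and have siblings. -/
def eleaf (T : LTree) : ℕ :=
  T.subtrees.countP (fun t => match t.children with
    | c :: _ :: _ => c.isLeaf
    | _ => false)

/-- The number of young leaves: leaves that are not the leftmost child of their parent. -/
def yleaf (T : LTree) : ℕ :=
  (T.subtrees.map (fun t => t.children.tail.countP isLeaf)).sum

/-- The number of young internal nodes: internal nodes whose leftmost child is internal. -/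
def yint (T : LTree) : ℕ :=
  T.subtrees.countP (fun t => match t.children with
    | c :: _ => !c.isLeaf
    | _ => false)

/-- The number of singleton internal nodes: parents of a singleton leaf. -/
def sint (T : LTree) : ℕ :=
  T.subtrees.countP (fun t => match t.children with
    | [c] => c.isLeaf
    | _ => false)

/-- The number of elder internal nodes: parents of an elder leaf. -/
def eint (T : LTree) : ℕ :=
  T.subtrees.countP (fun t => match t.children with
    | c :: _ :: _ => c.isLeaf
    | _ => false)

/-- The number of old leaves: leaves that are the leftmost child of their parent. -/
def oleaf (T : LTree) : ℕ := sleaf T + eleaf T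

/-- The number of old internal nodes. -/
def oint (T : LTree) : ℕ := sint T + eint T

end LTree

/-!
A tip-augmented tree with `n + 1` edges is `node 0 (leaf :: cs)`, where `cs` is a forest of
tip-augmented trees with `n` nodes in total, and the trees of `cs` that are single leaves become
young leaves. Weighting each tree of a forest by `u ^ oleaf * v ^ (yleaf + [it is a leaf])`, the
forest polynomials `Q e` therefore give the whole sum as `u * Q n`, and splitting off the first
tree of a forest (a leaf, or `node 0 (leaf :: a)`) gives the Motzkin recurrence
`Q (e + 1) = v * Q e + u * ∑_{i + j = e - 1} Q i * Q j`.

The right-hand side is `u` times the `v`-binomial transform `∑ₘ C(n, m) dₘ v ^ (n - m)` of the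
aerated Catalan sequence `d = (1, 0, u, 0, 2u², 0, 5u³, …)`. The Catalan recurrence says
`d (m + 1) = u * ∑_{i + j = m - 1} dᵢ dⱼ`, and the binomial transform commutes with this shifted
convolution (on generating series, `D ↦ D(x / (1 - v x)) / (1 - v x)`), so the transform
satisfies the same Motzkin recurrence.
-/

open Finset

section BinomialTransform

variable {R : Type*} [CommSemiring R]

def binomialTransform (v : R) (d : ℕ → R) (n : ℕ) : R :=
  ∑ p ∈ antidiagonal n, (n.choose p.1 : R) * (d p.1 * v ^ p.2)

/-- The coefficient sequence of `x * D x * E x`, for `D`, `E` the generating series of `d`, `e`. -/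
def shiftedConvolution (d e : ℕ → R) (m : ℕ) : R :=
  ∑ c : Fin m, d c * e (m - 1 - c)

lemma shiftedConvolution_zero (d e : ℕ → R) : shiftedConvolution d e 0 = 0 := by
  simp [shiftedConvolution]

lemma shiftedConvolution_succ (d e : ℕ → R) (m : ℕ) :
    shiftedConvolution d e (m + 1) = ∑ p ∈ antidiagonal m, d p.1 * e p.2 := by
  rw [shiftedConvolution, Fin.sum_univ_eq_sum_range (fun c => d c * e (m + 1 - 1 - c)),
    Nat.sum_antidiagonal_eq_sum_range_succ_mk, Nat.add_sub_cancel]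

lemma shiftedConvolution_succ_eq (d e : ℕ → R) (m : ℕ) :
    shiftedConvolution d e (m + 1) = d 0 * e m + shiftedConvolution (fun i => d (i + 1)) e m := by
  cases m with
  | zero => simp [shiftedConvolution_succ, shiftedConvolution_zero]
  | succ m => rw [shiftedConvolution_succ, Nat.sum_antidiagonal_succ, shiftedConvolution_succ]

lemma shiftedConvolution_congr {d d' e e' : ℕ → R} {m : ℕ} (hd : ∀ i < m, d i = d' i)
    (he : ∀ i < m, e i = e' i) : shiftedConvolution d e m = shiftedConvolution d' e' m := by
  refine sum_congr rfl fun c _ => ?_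
  rw [hd c c.isLt, he _ (by omega)]

variable (v : R)

lemma binomialTransform_zero (d : ℕ → R) : binomialTransform v d 0 = d 0 := by
  simp [binomialTransform]

lemma binomialTransform_succ (d : ℕ → R) (n : ℕ) :
    binomialTransform v d (n + 1) = v * binomialTransform v d n
      + binomialTransform v (fun m => d (m + 1)) n := by
  rw [binomialTransform, sum_antidiagonal_choose_succ_mul (fun i j => d i * v ^ j),
    binomialTransform, binomialTransform, mul_sum]
  congr 1
  · exact sum_congr rfl fun p _ => by ring
  · refine sum_congr rfl fun p hp => ?_
    rw [Nat.choose_symm_of_eq_add (mem_antidiagonal.mp hp).symm]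

lemma binomialTransform_mul_add (c : R) (d e : ℕ → R) (n : ℕ) :
    binomialTransform v (fun m => c * d m + e m) n
      = c * binomialTransform v d n + binomialTransform v e n := by
  simp only [binomialTransform, mul_sum, ← sum_add_distrib]
  exact sum_congr rfl fun p _ => by ring

lemma binomialTransform_mul_left (c : R) (d : ℕ → R) (n : ℕ) :
    binomialTransform v (fun m => c * d m) n = c * binomialTransform v d n := by
  simp only [binomialTransform, mul_sum]
  exact sum_congr rfl fun p _ => by ring

theorem binomialTransform_shiftedConvolution (d e : ℕ → R) :
    binomialTransform v (shiftedConvolution d e)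
      = shiftedConvolution (binomialTransform v d) (binomialTransform v e) := by
  funext n
  cases n with
  | zero => rw [binomialTransform_zero, shiftedConvolution_zero, shiftedConvolution_zero]
  | succ n =>
    rw [shiftedConvolution_succ]
    induction n generalizing d with
    | zero => simp [binomialTransform_succ, binomialTransform_zero, shiftedConvolution_succ,
        shiftedConvolution_zero]
    | succ n ih =>
      have hshift : (fun m => shiftedConvolution d e (m + 1))
          = fun m => d 0 * e m + shiftedConvolution (fun i => d (i + 1)) e m :=
        funext (shiftedConvolution_succ_eq d e)
      rw [binomialTransform_succ, hshift, binomialTransform_mul_add, ih, ih,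
        Nat.sum_antidiagonal_succ, binomialTransform_zero]
      simp only [binomialTransform_succ, add_mul, sum_add_distrib, mul_sum, mul_assoc]
      ring

end BinomialTransform

lemma sum_antidiagonal_eq_sum_range_two_mul {M : Type*} [AddCommMonoid M] (g : ℕ → ℕ → M)
    (hg : ∀ i j, Odd i → g i j = 0) (n : ℕ) :
    ∑ p ∈ antidiagonal n, g p.1 p.2 = ∑ k ∈ range (n / 2 + 1), g (2 * k) (n - 2 * k) := by
  have hinj : Set.InjOn (fun k => (2 * k, n - 2 * k)) (range (n / 2 + 1) : Set ℕ) :=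
    fun a _ b _ h => by simpa using congrArg Prod.fst h
  rw [← sum_image (f := fun p => g p.1 p.2) hinj]
  symm
  refine sum_subset (fun p hp => ?_) (fun p hp hnot => hg _ _ ?_)
  · obtain ⟨k, hk, rfl⟩ := mem_image.mp hp
    rw [mem_range] at hk
    rw [HasAntidiagonal.mem_antidiagonal]
    omega
  · rw [HasAntidiagonal.mem_antidiagonal] at hp
    rw [← Nat.not_even_iff_odd]
    rintro ⟨k, hk⟩
    exact hnot (mem_image.mpr
      ⟨k, mem_range.mpr (by omega), Prod.ext (by simp; omega) (by simp; omega)⟩)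

section Motzkin

variable {R : Type*} [CommSemiring R]

def aeratedCatalan (u : R) (m : ℕ) : R :=
  if Even m then (catalan (m / 2) : R) * u ^ (m / 2) else 0

variable (u v : R)

@[simp]
lemma aeratedCatalan_two_mul (k : ℕ) : aeratedCatalan u (2 * k) = catalan k * u ^ k := by
  simp [aeratedCatalan]

lemma aeratedCatalan_of_odd {m : ℕ} (hm : Odd m) : aeratedCatalan u m = 0 := by
  simp [aeratedCatalan, Nat.not_even_iff_odd.mpr hm]

lemma aeratedCatalan_succ (m : ℕ) :
    aeratedCatalan u (m + 1)
      = u * shiftedConvolution (aeratedCatalan u) (aeratedCatalan u) m := by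
  cases m with
  | zero => simp [aeratedCatalan_of_odd, shiftedConvolution_zero]
  | succ m =>
    rw [shiftedConvolution_succ, sum_antidiagonal_eq_sum_range_two_mul
      (fun i j => aeratedCatalan u i * aeratedCatalan u j)
      (fun i j hi => by rw [aeratedCatalan_of_odd u hi, zero_mul])]
    rcases Nat.even_or_odd' m with ⟨q, rfl | rfl⟩
    · have hsum : ∑ k ∈ range (2 * q / 2 + 1),
            aeratedCatalan u (2 * k) * aeratedCatalan u (2 * q - 2 * k)
          = ∑ p ∈ antidiagonal q, (catalan p.1 * catalan p.2 : R) * u ^ q := by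
        rw [Nat.sum_antidiagonal_eq_sum_range_succ_mk, Nat.mul_div_cancel_left _ two_pos]
        refine sum_congr rfl fun k hk => ?_
        obtain ⟨j, rfl⟩ := Nat.exists_eq_add_of_le (Nat.lt_succ_iff.mp (mem_range.mp hk))
        rw [← Nat.mul_sub, Nat.add_sub_cancel_left, aeratedCatalan_two_mul,
          aeratedCatalan_two_mul, pow_add]
        ring
      rw [hsum, ← sum_mul, show 2 * q + 1 + 1 = 2 * (q + 1) by ring, aeratedCatalan_two_mul,
        catalan_succ']
      push_cast
      ring
    · rw [aeratedCatalan_of_odd u ⟨q + 1, by ring⟩, eq_comm]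
      refine mul_eq_zero_of_right u (sum_eq_zero fun k hk => ?_)
      rw [aeratedCatalan_of_odd u (m := 2 * q + 1 - 2 * k) ⟨q - k, by
        have := mem_range.mp hk; omega⟩, mul_zero]

theorem binomialTransform_aeratedCatalan_succ (n : ℕ) :
    binomialTransform v (aeratedCatalan u) (n + 1)
      = v * binomialTransform v (aeratedCatalan u) n
        + u * shiftedConvolution (binomialTransform v (aeratedCatalan u))
            (binomialTransform v (aeratedCatalan u)) n := by
  rw [binomialTransform_succ, funext (aeratedCatalan_succ u), binomialTransform_mul_left,
    binomialTransform_shiftedConvolution]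

theorem binomialTransform_aeratedCatalan (n : ℕ) :
    binomialTransform v (aeratedCatalan u) n
      = ∑ k ∈ range (n / 2 + 1), (n.choose (2 * k) * catalan k : R) * u ^ k * v ^ (n - 2 * k) := by
  rw [binomialTransform, sum_antidiagonal_eq_sum_range_two_mul
    (fun i j => (n.choose i : R) * (aeratedCatalan u i * v ^ j))
    (fun i j hi => by rw [aeratedCatalan_of_odd u hi, zero_mul, mul_zero])]
  refine sum_congr rfl fun k _ => ?_
  rw [aeratedCatalan_two_mul]
  ring

variable {u v} in
theorem eq_of_motzkin_recurrence {f g : ℕ → R} (h0 : f 0 = g 0)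
    (hf : ∀ n, f (n + 1) = v * f n + u * shiftedConvolution f f n)
    (hg : ∀ n, g (n + 1) = v * g n + u * shiftedConvolution g g n) : f = g := by
  funext n
  induction n using Nat.strong_induction_on with
  | _ n ih =>
    cases n with
    | zero => exact h0
    | succ n =>
      have hlt : ∀ i < n, f i = g i := fun i hi => ih i (by omega)
      rw [hf, hg, ih n n.lt_succ_self, shiftedConvolution_congr hlt hlt]

end Motzkin

namespace LTree

lemma subtrees_node (a : ℕ) (cs : List LTree) :
    (node a cs).subtrees = node a cs :: (cs.map subtrees).flatten := by
  rw [subtrees]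
  simp

lemma mem_subtrees_self (t : LTree) : t ∈ t.subtrees := by
  cases t
  rw [subtrees_node]
  exact List.mem_cons_self

def forestSize (cs : List LTree) : ℕ := (cs.map fun c => c.subtrees.length).sum

lemma forestSize_nil : forestSize [] = 0 := rfl

lemma forestSize_cons (t : LTree) (cs : List LTree) :
    forestSize (t :: cs) = t.subtrees.length + forestSize cs := List.sum_cons

lemma length_subtrees_pos (t : LTree) : 0 < t.subtrees.length :=
  List.length_pos_of_mem t.mem_subtrees_self

lemma length_subtrees_node (a : ℕ) (cs : List LTree) :
    (node a cs).subtrees.length = forestSize cs + 1 := by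
  simp [subtrees_node, forestSize, List.length_flatten, List.map_map, Function.comp_def]

lemma forall_mem_subtrees_node {P : LTree → Prop} {a : ℕ} {cs : List LTree} :
    (∀ s ∈ (node a cs).subtrees, P s) ↔ P (node a cs) ∧ ∀ c ∈ cs, ∀ s ∈ c.subtrees, P s := by
  simp only [subtrees_node, List.forall_mem_cons, List.forall_mem_flatten, List.forall_mem_map]

lemma countP_subtrees_node (p : LTree → Bool) (a : ℕ) (cs : List LTree) :
    (node a cs).subtrees.countP p
      = (cs.map fun c => c.subtrees.countP p).sum + if p (node a cs) then 1 else 0 := by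
  rw [subtrees_node, List.countP_cons, List.countP_flatten, List.map_map]
  rfl

lemma yint_node_eq_zero_iff {a : ℕ} {cs : List LTree} :
    (node a cs).yint = 0 ↔ (∀ c ∈ cs.head?, c.isLeaf) ∧ ∀ c ∈ cs, c.yint = 0 := by
  rw [yint, countP_subtrees_node, Nat.add_eq_zero_iff, List.sum_eq_zero_iff]
  cases cs <;> simp [children, yint, and_comm]

lemma sum_map_subtrees_node (f : LTree → ℕ) (a : ℕ) (cs : List LTree) :
    ((node a cs).subtrees.map f).sum
      = (cs.map fun c => (c.subtrees.map f).sum).sum + f (node a cs) := by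
  simp [subtrees_node, List.map_flatten, List.sum_flatten, List.map_map, Function.comp_def,
    add_comm]

lemma sleaf_node (a : ℕ) (cs : List LTree) :
    sleaf (node a cs)
      = (cs.map sleaf).sum + if (match cs with | [c] => c.isLeaf | _ => false) then 1 else 0 :=
  countP_subtrees_node _ a cs

lemma eleaf_node (a : ℕ) (cs : List LTree) :
    eleaf (node a cs) = (cs.map eleaf).sum
      + if (match cs with | c :: _ :: _ => c.isLeaf | _ => false) then 1 else 0 :=
  countP_subtrees_node _ a cs

lemma yleaf_node (a : ℕ) (cs : List LTree) :
    yleaf (node a cs) = (cs.map yleaf).sum + cs.tail.countP isLeaf :=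
  sum_map_subtrees_node _ a cs

def leaf : LTree := node 0 []

lemma subtrees_leaf : leaf.subtrees = [leaf] := by
  simp [leaf, subtrees_node]

lemma length_subtrees_leaf : leaf.subtrees.length = 1 := by
  rw [subtrees_leaf, List.length_singleton]

lemma length_subtrees_node_leaf_cons (a : ℕ) (cs : List LTree) :
    (node a (leaf :: cs)).subtrees.length = forestSize cs + 2 := by
  rw [length_subtrees_node, forestSize_cons, length_subtrees_leaf]
  omega

def IsTipAugmented (t : LTree) : Prop :=
  (∀ s ∈ t.subtrees, s.label = 0) ∧ t.yint = 0

lemma isTipAugmented_node_iff {a : ℕ} {cs : List LTree} :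
    IsTipAugmented (node a cs)
      ↔ a = 0 ∧ (∀ c ∈ cs.head?, c.isLeaf) ∧ ∀ c ∈ cs, IsTipAugmented c := by
  simp only [IsTipAugmented, forall_mem_subtrees_node, yint_node_eq_zero_iff, label]
  grind

lemma isTipAugmented_leaf : IsTipAugmented leaf := by
  simp [leaf, isTipAugmented_node_iff]

lemma isTipAugmented_iff {t : LTree} :
    IsTipAugmented t
      ↔ t = leaf ∨ ∃ cs, t = node 0 (leaf :: cs) ∧ ∀ c ∈ cs, IsTipAugmented c := by
  obtain ⟨a, _ | ⟨d, cs⟩⟩ := t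
  · simp [isTipAugmented_node_iff, leaf]
  · obtain ⟨b, ds⟩ := d
    cases ds <;> simp [isTipAugmented_node_iff, leaf, isLeaf, children, and_assoc]

open scoped Classical in
noncomputable def tipForests : ℕ → Finset (List LTree)
  | 0 => {[]}
  | e + 1 => (tipForests e).image (leaf :: ·) ∪ Finset.univ.biUnion fun c : Fin e =>
      (tipForests c ×ˢ tipForests (e - 1 - c)).image fun p => node 0 (leaf :: p.1) :: p.2

lemma mem_tipForests {e : ℕ} {cs : List LTree} :
    cs ∈ tipForests e ↔ forestSize cs = e ∧ ∀ c ∈ cs, IsTipAugmented c := by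
  induction e using Nat.strong_induction_on generalizing cs with
  | _ e ih =>
  cases e with
  | zero =>
    rw [tipForests, Finset.mem_singleton]
    cases cs with
    | nil => simp [forestSize_nil]
    | cons t cs => simp [forestSize_cons, (length_subtrees_pos t).ne']
  | succ e =>
    simp only [tipForests, Finset.mem_union, Finset.mem_image, Finset.mem_biUnion,
      Finset.mem_univ, true_and, Finset.mem_product, Prod.exists]
    constructor
    · rintro (⟨cs, hcs, rfl⟩ | ⟨c, a, b, ⟨ha, hb⟩, rfl⟩)
      · rw [ih e e.lt_succ_self] at hcs
        refine ⟨?_, List.forall_mem_cons.mpr ⟨isTipAugmented_leaf, hcs.2⟩⟩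
        rw [forestSize_cons, length_subtrees_leaf, hcs.1, add_comm]
      · rw [ih c (by omega)] at ha
        rw [ih _ (by omega)] at hb
        refine ⟨?_, List.forall_mem_cons.mpr
          ⟨isTipAugmented_iff.mpr (Or.inr ⟨a, rfl, ha.2⟩), hb.2⟩⟩
        rw [forestSize_cons, length_subtrees_node_leaf_cons, ha.1, hb.1]
        omega
    · rintro ⟨hsize, htip⟩
      obtain _ | ⟨t, rest⟩ := cs
      · simp [forestSize_nil] at hsize
      rw [List.forall_mem_cons] at htip
      rw [forestSize_cons] at hsize
      obtain rfl | ⟨a, rfl, ha⟩ := isTipAugmented_iff.mp htip.1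
      · rw [length_subtrees_leaf] at hsize
        exact Or.inl ⟨rest, (ih e e.lt_succ_self).mpr ⟨by omega, htip.2⟩, rfl⟩
      · rw [length_subtrees_node_leaf_cons] at hsize
        exact Or.inr ⟨⟨forestSize a, by omega⟩, a, rest,
          ⟨(ih _ (by omega)).mpr ⟨rfl, ha⟩,
            (ih _ (by omega)).mpr ⟨by rw [Fin.val_mk]; omega, htip.2⟩⟩, rfl⟩

lemma oleaf_node_leaf_cons (a : ℕ) (cs : List LTree) :
    oleaf (node a (leaf :: cs)) = (cs.map oleaf).sum + 1 := by
  have hsum : (cs.map oleaf).sum = (cs.map sleaf).sum + (cs.map eleaf).sum := List.sum_map_add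
  cases cs <;> simp [oleaf, sleaf_node, eleaf_node, leaf, isLeaf, children] at hsum ⊢
  omega

lemma yleaf_node_leaf_cons (a : ℕ) (cs : List LTree) :
    yleaf (node a (leaf :: cs)) = (cs.map yleaf).sum + cs.countP isLeaf := by
  simp [yleaf_node, leaf]

section Weight

variable {R : Type*} [CommSemiring R] (u v : R)

def treeWeight (t : LTree) : R := u ^ t.oleaf * v ^ (t.yleaf + if t.isLeaf then 1 else 0)

lemma prod_map_treeWeight (cs : List LTree) :
    (cs.map (treeWeight u v)).prod
      = u ^ (cs.map oleaf).sum * v ^ ((cs.map yleaf).sum + cs.countP isLeaf) := by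
  induction cs with
  | nil => simp
  | cons c cs ih =>
    simp only [List.map_cons, List.prod_cons, ih, treeWeight, List.sum_cons, List.countP_cons,
      pow_add]
    ring

lemma pow_oleaf_mul_pow_yleaf_node_leaf_cons (a : ℕ) (cs : List LTree) :
    u ^ (node a (leaf :: cs)).oleaf * v ^ (node a (leaf :: cs)).yleaf
      = u * (cs.map (treeWeight u v)).prod := by
  rw [oleaf_node_leaf_cons, yleaf_node_leaf_cons, prod_map_treeWeight, pow_succ]
  ring

lemma treeWeight_leaf : treeWeight u v leaf = v := by
  simp [treeWeight, leaf, oleaf, sleaf_node, eleaf_node, yleaf_node, isLeaf, children]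

lemma treeWeight_node_leaf_cons (a : ℕ) (cs : List LTree) :
    treeWeight u v (node a (leaf :: cs)) = u * (cs.map (treeWeight u v)).prod := by
  rw [← pow_oleaf_mul_pow_yleaf_node_leaf_cons u v a]
  simp [treeWeight, isLeaf, children]

noncomputable def tipForestPoly (e : ℕ) : R :=
  ∑ cs ∈ tipForests e, (cs.map (treeWeight u v)).prod

lemma tipForestPoly_zero : tipForestPoly u v 0 = 1 := by
  simp [tipForestPoly, tipForests]

lemma tipForestPoly_succ (e : ℕ) :
    tipForestPoly u v (e + 1)
      = v * tipForestPoly u v e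
        + u * shiftedConvolution (tipForestPoly u v) (tipForestPoly u v) e := by
  classical
  have hdisj : Disjoint ((tipForests e).image (leaf :: ·)) (Finset.univ.biUnion fun c : Fin e =>
      (tipForests c ×ˢ tipForests (e - 1 - c)).image fun p => node 0 (leaf :: p.1) :: p.2) := by
    simp [Finset.disjoint_left, leaf]
  have hpair : Set.PairwiseDisjoint ((Finset.univ : Finset (Fin e)) : Set (Fin e)) fun c =>
      (tipForests c ×ˢ tipForests (e - 1 - c)).image fun p => node 0 (leaf :: p.1) :: p.2 := by
    intro c _ c' _ hne
    simp only [Function.onFun, Finset.disjoint_left, Finset.mem_image, Finset.mem_product]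
    rintro _ ⟨⟨a, b⟩, ⟨ha, -⟩, rfl⟩ ⟨⟨a', b'⟩, ⟨ha', -⟩, heq⟩
    simp only [List.cons.injEq, node.injEq, true_and] at heq
    rw [heq.1, mem_tipForests] at ha'
    rw [mem_tipForests] at ha
    exact hne (Fin.ext (ha.1.symm.trans ha'.1))
  rw [tipForestPoly, tipForests, Finset.sum_union hdisj, Finset.sum_biUnion hpair,
    Finset.sum_image (fun _ _ _ _ h => List.cons_injective h), shiftedConvolution, Finset.mul_sum]
  congr 1
  · simp [treeWeight_leaf, tipForestPoly, Finset.mul_sum]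
  refine Finset.sum_congr rfl fun c _ => ?_
  rw [Finset.sum_image (fun p _ q _ h => by simpa [Prod.ext_iff] using h), Finset.sum_product,
    tipForestPoly, tipForestPoly, Finset.sum_mul_sum]
  simp only [Finset.mul_sum]
  refine Finset.sum_congr rfl fun a _ => Finset.sum_congr rfl fun b _ => ?_
  rw [List.map_cons, List.prod_cons, treeWeight_node_leaf_cons]
  ring

end Weight

lemma isPlane_succ_and_yint_eq_zero_iff {n : ℕ} {T : LTree} :
    IsPlane (n + 1) T ∧ T.yint = 0 ↔ ∃ cs ∈ tipForests n, node 0 (leaf :: cs) = T := by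
  rw [IsPlane, and_right_comm, ← IsTipAugmented]
  constructor
  · rintro ⟨htip, hlen⟩
    obtain rfl | ⟨cs, rfl, hcs⟩ := isTipAugmented_iff.mp htip
    · simp [subtrees_leaf] at hlen
    · rw [length_subtrees_node_leaf_cons] at hlen
      exact ⟨cs, mem_tipForests.mpr ⟨by omega, hcs⟩, rfl⟩
  · rintro ⟨cs, hcs, rfl⟩
    rw [mem_tipForests] at hcs
    exact ⟨isTipAugmented_iff.mpr (Or.inr ⟨cs, rfl, hcs.2⟩), by
      rw [length_subtrees_node_leaf_cons, hcs.1]⟩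

end LTree

open MvPolynomial in
/-- **Theorem (generating function of tip-augmented plane trees).**  For `n ≥ 0`,
`Σ_{T ∈ 𝒜_{n+1}} u^{oleaf(T)} v^{yleaf(T)} = Σ_{k=0}^{⌊n/2⌋} C(n,2k)·Catalan(k)·u^{k+1} v^{n-2k}`
where `𝒜_{n+1}` is the set of tip-augmented plane trees with `n+1` edges.
Here `u = X 0`, `v = X 1` in `ℤ[u,v]`. -/
theorem tip_augmented_plane_tree_motzkin
    (n : ℕ) (An : Finset LTree)
    (hAn : ∀ T, T ∈ An ↔ (LTree.IsPlane (n + 1) T ∧ LTree.yint T = 0)) :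
    ∑ T ∈ An, (X 0 : MvPolynomial (Fin 2) ℤ) ^ LTree.oleaf T * X 1 ^ LTree.yleaf T
      = ∑ k ∈ Finset.range (n / 2 + 1),
          ((n.choose (2 * k) * catalan k : ℕ) : MvPolynomial (Fin 2) ℤ) *
            X 0 ^ (k + 1) * X 1 ^ (n - 2 * k) := by
  classical
  have hAn' : An = (LTree.tipForests n).image fun cs => .node 0 (.leaf :: cs) := by
    ext T
    rw [hAn, Finset.mem_image, LTree.isPlane_succ_and_yint_eq_zero_iff]
  have hmotzkin : LTree.tipForestPoly (X 0) (X 1)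
      = binomialTransform (X 1 : MvPolynomial (Fin 2) ℤ) (aeratedCatalan (X 0)) :=
    eq_of_motzkin_recurrence (by simp [LTree.tipForestPoly_zero, binomialTransform_zero,
      aeratedCatalan]) (LTree.tipForestPoly_succ _ _) (binomialTransform_aeratedCatalan_succ _ _)
  rw [hAn', Finset.sum_image fun _ _ _ _ h => by simpa using h]
  simp only [LTree.pow_oleaf_mul_pow_yleaf_node_leaf_cons]
  rw [← Finset.mul_sum, ← LTree.tipForestPoly, hmotzkin, binomialTransform_aeratedCatalan,
    Finset.mul_sum]
  refine Finset.sum_congr rfl fun k _ => ?_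
  push_cast
  ring
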